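/- If 0 ≤ x ≤ 1/3, x < y ≤ 1, and x + y ≥ 1, then x(1+3y)/4 < y(1+3x)/4 ≤ y/(3(1-x)), and the second inequality is an equality if and only if x = 1/3. -/

import Mathlib

/-!
After clearing denominators the first inequality is just `x < y`, since
`x (1 + 3y) - y (1 + 3x) = x - y`. For the second, `3 (1 + 3x)(1 - x) = 4 - (3x - 1)²`,
so it amounts to `(3x - 1)² ≥ 0`, with equality exactly at `x = 1/3`.
-/

lemma mul_one_add_three_mul_mul_three_mul_one_sub (x y : ℝ) :
    y * (1 + 3 * x) * (3 * (1 - x)) = y * (4 - (3 * x - 1) ^ 2) := by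
  ring

lemma div_four_le_div_three_mul_one_sub {x y : ℝ} (hy : 0 ≤ y) (hx : x < 1) :
    y * (1 + 3 * x) / 4 ≤ y / (3 * (1 - x)) := by
  rw [div_le_div_iff₀ four_pos (by linarith), mul_one_add_three_mul_mul_three_mul_one_sub]
  exact mul_le_mul_of_nonneg_left (sub_le_self _ (sq_nonneg _)) hy

lemma div_four_eq_div_three_mul_one_sub_iff {x y : ℝ} (hy : y ≠ 0) (hx : x ≠ 1) :
    y * (1 + 3 * x) / 4 = y / (3 * (1 - x)) ↔ x = 1 / 3 := by
  rw [div_eq_div_iff four_ne_zero (mul_ne_zero three_ne_zero (sub_ne_zero.2 hx.symm)),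
    mul_one_add_three_mul_mul_three_mul_one_sub, mul_right_inj' hy, sub_eq_self,
    pow_eq_zero_iff two_ne_zero, sub_eq_zero]
  constructor <;> intro h <;> linarith

theorem stmt_3 (x y : ℝ) (hx0 : 0 ≤ x) (hx : x ≤ 1/3) (hxy : x < y) :
    x*(1+3*y)/4 < y*(1+3*x)/4 ∧ y*(1+3*x)/4 ≤ y/(3*(1-x)) ∧
      (y*(1+3*x)/4 = y/(3*(1-x)) ↔ x = 1/3) := by
  have hy : 0 < y := hx0.trans_lt hxy
  have hx1 : x < 1 := by linarith
  exact ⟨by linarith, div_four_le_div_three_mul_one_sub hy.le hx1,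
    div_four_eq_div_three_mul_one_sub_iff hy.ne' hx1.ne⟩
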